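/- Let A be a unital C*-algebra, let s, n ≥ 1 be integers, and set w = exp(2πi/s). Let u = (u_ij) be an n×n matrix over A satisfying the level-s cubic relations: u is unitary, the transpose u^t is unitary, each u_ij is normal, each p_ij = u_ij u_ij* is a projection, and u_ij^s = p_ij. With the convention u_ij^0 = p_ij, define A^p_{ij} = (1/s) Σ_{r=0}^{s-1} w^{rp} u_ij^r for p ∈ ℤ/sℤ. Then each A^p_{ij} is a projection, and the matrix M_{(p,i),(q,j)} = A^{q-p}_{ij}, indexed by (ℤ/sℤ) × {1,…,n}, is a magic unitary: all its entries are projections and each of its rows and columns sums to 1. -/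

import Mathlib

/- For a single entry `a = u i j`, the C*-identity makes the projection `p = a a* = a ^ s`
a two-sided unit for `a` (`p a = a`, and `a p = a` by normality). Hence `m ↦ a ^ s * a ^ m` is a
well-defined multiplicative map `v` on `ℤ/sℤ` with `v 0 = p` and `(v m)* = v (-m)`: a unitary
representation of `ℤ/sℤ` on the corner `pAp`, of which `A^p_ij` is the isotypic projection for the
character `m ↦ w ^ (m p)`. Orthogonality of characters makes these projections sum to `p`, so the
rows and columns of `M` sum to `∑ j, u i j * star (u i j) = 1` and `∑ i, u i j * star (u i j) = 1`.
-/

/-- From a matrix `u` satisfying the level-`s` cubic relations, form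
`A^p_{ij} = (1/s) Σ_{r=0}^{s-1} w^{rp} u_ij^r` with the convention
`u_ij^0 = p_ij = u_ij u_ij*`, where `w = exp(2πi/s)`. -/
noncomputable def cubicToSudoku (s n : ℕ) [NeZero s] {A : Type*} [CStarAlgebra A]
    (u : Fin n → Fin n → A) (p : ZMod s) (i j : Fin n) : A :=
  (s : ℂ)⁻¹ • ∑ r ∈ Finset.range s,
    (Complex.exp (2 * Real.pi * Complex.I / s) ^ (r * p.val)) •
      (if r = 0 then u i j * star (u i j) else u i j ^ r)

open Finset

theorem sum_range_eq_sum_zmod {N : Type*} [AddCommMonoid N] {s : ℕ} [NeZero s] (f : ZMod s → N) :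
    ∑ r ∈ range s, f r = ∑ m, f m :=
  sum_nbij' (fun r => (r : ZMod s)) ZMod.val (fun _ _ => mem_univ _)
    (fun m _ => mem_range.mpr (ZMod.val_lt m))
    (fun _ hr => ZMod.val_natCast_of_lt (mem_range.mp hr)) (fun m _ => ZMod.natCast_zmod_val m)
    (fun _ _ => rfl)

section CharProjection

variable {G A : Type*} [AddCommGroup G] [Fintype G] [Ring A] [Algebra ℂ A]

noncomputable def charProjection (ψ : AddChar G ℂ) (v : G → A) : A :=
  (Fintype.card G : ℂ)⁻¹ • ∑ g, ψ g • v g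

theorem isIdempotentElem_charProjection (ψ : AddChar G ℂ) {v : G → A}
    (hv : ∀ g h, v (g + h) = v g * v h) : IsIdempotentElem (charProjection ψ v) := by
  have hcard : (Fintype.card G : ℂ) ≠ 0 := Nat.cast_ne_zero.mpr Fintype.card_ne_zero
  have hsq : (∑ g, ψ g • v g) * (∑ g, ψ g • v g) = (Fintype.card G : ℂ) • ∑ g, ψ g • v g := by
    calc (∑ g, ψ g • v g) * (∑ g, ψ g • v g)
        = ∑ g, ∑ h, ψ (g + h) • v (g + h) := by
          simp only [sum_mul_sum, smul_mul_smul_comm, AddChar.map_add_eq_mul, hv]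
      _ = ∑ _g : G, ∑ h, ψ h • v h :=
          sum_congr rfl fun g _ => Fintype.sum_equiv (Equiv.addLeft g) _ _ fun _ => rfl
      _ = (Fintype.card G : ℂ) • ∑ g, ψ g • v g := by
          rw [sum_const, card_univ, Nat.cast_smul_eq_nsmul]
  rw [IsIdempotentElem, charProjection, smul_mul_smul_comm, hsq, smul_smul]
  congr 1
  field_simp

theorem isSelfAdjoint_charProjection [StarRing A] [StarModule ℂ A] (ψ : AddChar G ℂ)
    {v : G → A} (hv : ∀ g, star (v g) = v (-g)) : IsSelfAdjoint (charProjection ψ v) := by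
  have hsum : star (∑ g, ψ g • v g) = ∑ g, ψ g • v g := by
    rw [star_sum]
    refine Fintype.sum_equiv (Equiv.neg G) _ _ fun g => ?_
    rw [star_smul, hv, RCLike.star_def, ← AddChar.map_neg_eq_conj, Equiv.neg_apply]
  rw [IsSelfAdjoint, charProjection, star_smul, hsum, star_inv₀, star_natCast]

theorem sum_charProjection_mulShift {R : Type*} [CommRing R] [Fintype R] [DecidableEq R]
    {ψ : AddChar R ℂ} (hψ : ψ.IsPrimitive) (v : R → A) :
    ∑ r, charProjection (ψ.mulShift r) v = v 0 := by
  have hcard : (Fintype.card R : ℂ) ≠ 0 := Nat.cast_ne_zero.mpr Fintype.card_ne_zero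
  simp only [charProjection, AddChar.mulShift_apply, ← smul_sum]
  rw [sum_comm]
  simp only [← sum_smul, AddChar.sum_mulShift _ hψ, Nat.cast_ite, Nat.cast_zero, ite_smul,
    zero_smul, sum_ite_eq', mem_univ, if_true]
  rw [smul_smul, inv_mul_cancel₀ hcard, one_smul]

end CharProjection

section CyclicPow

variable {M : Type*} [Monoid M] {a : M} {s : ℕ}

/-- When `a ^ s` is idempotent, `n ↦ a ^ s * a ^ n` is `s`-periodic, so it descends to `ZMod s`. -/
def cyclicPow (a : M) (s : ℕ) (m : ZMod s) : M := a ^ s * a ^ m.val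

theorem cyclicPow_zero : cyclicPow a s 0 = a ^ s := by
  simp [cyclicPow]

theorem cyclicPow_natCast (h : IsIdempotentElem (a ^ s)) (n : ℕ) :
    cyclicPow a s n = a ^ s * a ^ n := by
  conv_rhs => rw [← Nat.div_add_mod n s, pow_add, pow_mul, ← mul_assoc, ← pow_succ',
    h.pow_succ_eq]
  rw [cyclicPow, ZMod.val_natCast]

theorem cyclicPow_add [NeZero s] (h : IsIdempotentElem (a ^ s)) (m k : ZMod s) :
    cyclicPow a s (m + k) = cyclicPow a s m * cyclicPow a s k := by
  rw [← ZMod.natCast_zmod_val m, ← ZMod.natCast_zmod_val k, ← Nat.cast_add,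
    cyclicPow_natCast h, cyclicPow_natCast h, cyclicPow_natCast h]
  calc a ^ s * a ^ (m.val + k.val) = a ^ s * a ^ s * a ^ m.val * a ^ k.val := by
        rw [h.eq, pow_add, mul_assoc]
    _ = a ^ s * (a ^ m.val * a ^ s) * a ^ k.val := by
        rw [mul_assoc (a ^ s) (a ^ s), (Commute.pow_pow_self a m.val s).eq]
    _ = a ^ s * a ^ m.val * (a ^ s * a ^ k.val) := by simp only [mul_assoc]

theorem cyclicPow_pow_mul [NeZero s] (h : IsIdempotentElem (a ^ s)) (g m : ZMod s) (k : ℕ) :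
    cyclicPow a s g ^ k * cyclicPow a s m = cyclicPow a s (k • g + m) := by
  induction k with
  | zero => simp
  | succ k ih => rw [pow_succ', mul_assoc, ih, ← cyclicPow_add h, succ_nsmul', add_assoc]

theorem star_cyclicPow [NeZero s] [StarMul M] (h : IsIdempotentElem (a ^ s))
    (hsa : IsSelfAdjoint (a ^ s)) (hstar : star a = cyclicPow a s (-1)) (m : ZMod s) :
    star (cyclicPow a s m) = cyclicPow a s (-m) := by
  rw [cyclicPow, star_mul, star_pow, hsa.star_eq, ← cyclicPow_zero (a := a) (s := s), hstar,
    cyclicPow_pow_mul h, add_zero, smul_neg, nsmul_one, ZMod.natCast_zmod_val]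

end CyclicPow

theorem mul_star_self_mul_eq_self {A : Type*} [NonUnitalNormedRing A] [StarRing A] [CStarRing A]
    {a : A} (hp : IsIdempotentElem (a * star a)) : a * star a * a = a := by
  set p := a * star a with hp_def
  have hsa : star p = p := by rw [hp_def, star_mul, star_star]
  have hzero : (p * a - a) * star (p * a - a) = 0 := by
    calc (p * a - a) * star (p * a - a) = p * p * p - p * p - p * p + p := by
          rw [star_sub, star_mul, hsa, hp_def]; noncomm_ring
      _ = 0 := by rw [hp.eq, hp.eq]; abel
  exact sub_eq_zero.mp (CStarRing.mul_star_self_eq_zero_iff _ |>.mp hzero)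

section CStarRing

variable {A : Type*} [NormedRing A] [StarRing A] [CStarRing A] {a : A} {s : ℕ}

theorem mul_star_self_mul_pow_eq_self (hp : IsIdempotentElem (a * star a)) {r : ℕ} (hr : r ≠ 0) :
    a * star a * a ^ r = a ^ r := by
  obtain ⟨k, rfl⟩ := Nat.exists_eq_succ_of_ne_zero hr
  rw [pow_succ', ← mul_assoc, mul_star_self_mul_eq_self hp]

theorem star_eq_cyclicPow_neg_one [NeZero s] (ha : a * star a = star a * a)
    (hp : IsIdempotentElem (a * star a)) (hs : a ^ s = a * star a) :
    star a = cyclicPow a s (-1) := by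
  have hpa : a * (a * star a) = a := by rw [ha, ← mul_assoc, mul_star_self_mul_eq_self hp]
  have hs1 : s - 1 + 1 = s := Nat.succ_pred_eq_of_ne_zero (NeZero.ne s)
  have hcast : ((s - 1 : ℕ) : ZMod s) = -1 := by
    rw [Nat.cast_pred (Nat.pos_of_neZero s), ZMod.natCast_self, zero_sub]
  rw [← hcast, cyclicPow_natCast (hs ▸ hp), (Commute.pow_pow_self a s (s - 1)).eq, hs,
    ← mul_assoc, ← pow_succ, hs1, hs]
  calc star a = star (a * (a * star a)) := by rw [hpa]
    _ = a * star a * star a := by rw [star_mul, star_mul, star_star]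

end CStarRing

section CStarAlgebra

variable {A : Type*} [CStarAlgebra A] {a : A} {s : ℕ} [NeZero s]

theorem isStarProjection_charProjection_cyclicPow (ψ : AddChar (ZMod s) ℂ)
    (ha : a * star a = star a * a) (hp : IsIdempotentElem (a * star a))
    (hs : a ^ s = a * star a) : IsStarProjection (charProjection ψ (cyclicPow a s)) := by
  have hidem : IsIdempotentElem (a ^ s) := hs ▸ hp
  have hsa : IsSelfAdjoint (a ^ s) := by rw [hs, IsSelfAdjoint, star_mul, star_star]
  exact ⟨isIdempotentElem_charProjection ψ (cyclicPow_add hidem),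
    isSelfAdjoint_charProjection ψ
      (star_cyclicPow hidem hsa (star_eq_cyclicPow_neg_one ha hp hs))⟩

theorem cubicToSudoku_eq_charProjection {n : ℕ} (u : Fin n → Fin n → A)
    (p : ZMod s) (i j : Fin n) (hp : IsIdempotentElem (u i j * star (u i j)))
    (hs : u i j ^ s = u i j * star (u i j)) :
    cubicToSudoku s n u p i j =
      charProjection (ZMod.stdAddChar.mulShift p) (cyclicPow (u i j) s) := by
  rw [cubicToSudoku, charProjection, ZMod.card, ← sum_range_eq_sum_zmod]
  congr 1
  refine sum_congr rfl fun r _ => ?_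
  have hchar : ZMod.stdAddChar.mulShift p r =
      Complex.exp (2 * Real.pi * Complex.I / s) ^ (r * p.val) := by
    rw [AddChar.mulShift_apply, show p * r = ((p.val * r : ℕ) : ZMod s) by simp,
      ZMod.stdAddChar_apply, ZMod.toCircle_natCast, ← Complex.exp_nat_mul]
    push_cast
    ring_nf
  have hpow : cyclicPow (u i j) s r = if r = 0 then u i j * star (u i j) else u i j ^ r := by
    rw [cyclicPow_natCast (hs ▸ hp), hs]
    split_ifs with hr0
    · rw [hr0, pow_zero, mul_one]
    · exact mul_star_self_mul_pow_eq_self hp hr0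
  rw [hchar, hpow]

end CStarAlgebra

theorem cubic_gives_sudoku_general (s n : ℕ) [NeZero s]
    {A : Type*} [CStarAlgebra A] (u : Fin n → Fin n → A)
    (hU1 : ∀ i j, ∑ k, u i k * star (u j k) = if i = j then 1 else 0)
    (hT1 : ∀ i j, ∑ k, u k i * star (u k j) = if i = j then 1 else 0)
    (hnormal : ∀ i j, u i j * star (u i j) = star (u i j) * u i j)
    (hproj : ∀ i j, star (u i j * star (u i j)) = u i j * star (u i j) ∧
      (u i j * star (u i j)) * (u i j * star (u i j)) = u i j * star (u i j))
    (hpow : ∀ i j, u i j ^ s = u i j * star (u i j)) :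
    (∀ (p : ZMod s) (i j : Fin n),
      star (cubicToSudoku s n u p i j) = cubicToSudoku s n u p i j ∧
        cubicToSudoku s n u p i j * cubicToSudoku s n u p i j =
          cubicToSudoku s n u p i j) ∧
    (∀ (p : ZMod s) (i : Fin n),
      ∑ q : ZMod s, ∑ j : Fin n, cubicToSudoku s n u (q - p) i j = 1) ∧
    (∀ (q : ZMod s) (j : Fin n),
      ∑ p : ZMod s, ∑ i : Fin n, cubicToSudoku s n u (q - p) i j = 1) := by
  have hQ p i j := cubicToSudoku_eq_charProjection u p i j (hproj i j).2 (hpow i j)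
  have hsum i j (e : ZMod s ≃ ZMod s) :
      ∑ p, cubicToSudoku s n u (e p) i j = u i j * star (u i j) := by
    rw [e.sum_comp (fun p => cubicToSudoku s n u p i j)]
    simp only [hQ]
    rw [sum_charProjection_mulShift (ZMod.isPrimitive_stdAddChar s), cyclicPow_zero, hpow]
  refine ⟨fun p i j => ?_, fun p i => ?_, fun q j => ?_⟩
  · have h := hQ p i j ▸
      isStarProjection_charProjection_cyclicPow _ (hnormal i j) (hproj i j).2 (hpow i j)
    exact ⟨h.isSelfAdjoint.star_eq, h.isIdempotentElem.eq⟩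
  · rw [sum_comm]
    refine (sum_congr rfl fun j _ => hsum i j (Equiv.subRight p)).trans ?_
    simpa using hU1 i i
  · rw [sum_comm]
    refine (sum_congr rfl fun i _ => hsum i j (Equiv.subLeft q)).trans ?_
    simpa using hT1 j j

/-- if `u` satisfies the level-`s` cubic relations, then each
`A^p_{ij} = (1/s) Σ_r w^{rp} u_ij^r` is a projection, and the circulant matrix
`M_{(p,i),(q,j)} = A^{q-p}_{ij}` is a magic unitary: all entries are projections
and every row and column sums to `1`. -/
theorem cubic_gives_sudoku (s n : ℕ) [NeZero s] (hn : 1 ≤ n)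
    {A : Type*} [CStarAlgebra A] (u : Fin n → Fin n → A)
    (hU1 : ∀ i j, ∑ k, u i k * star (u j k) = if i = j then 1 else 0)
    (hU2 : ∀ i j, ∑ k, star (u k i) * u k j = if i = j then 1 else 0)
    (hT1 : ∀ i j, ∑ k, u k i * star (u k j) = if i = j then 1 else 0)
    (hT2 : ∀ i j, ∑ k, star (u i k) * u j k = if i = j then 1 else 0)
    (hnormal : ∀ i j, u i j * star (u i j) = star (u i j) * u i j)
    (hproj : ∀ i j, star (u i j * star (u i j)) = u i j * star (u i j) ∧
      (u i j * star (u i j)) * (u i j * star (u i j)) = u i j * star (u i j))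
    (hpow : ∀ i j, u i j ^ s = u i j * star (u i j)) :
    (∀ (p : ZMod s) (i j : Fin n),
      star (cubicToSudoku s n u p i j) = cubicToSudoku s n u p i j ∧
        cubicToSudoku s n u p i j * cubicToSudoku s n u p i j =
          cubicToSudoku s n u p i j) ∧
    (∀ (p : ZMod s) (i : Fin n),
      ∑ q : ZMod s, ∑ j : Fin n, cubicToSudoku s n u (q - p) i j = 1) ∧
    (∀ (q : ZMod s) (j : Fin n),
      ∑ p : ZMod s, ∑ i : Fin n, cubicToSudoku s n u (q - p) i j = 1) :=
  cubic_gives_sudoku_general s n u hU1 hT1 hnormal hproj hpow
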